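/- Backward determinism of inverse assignment: if σ' = σ[x ↦ ⟦⊕⟧(σ(x), v)] is the store resulting from a Janus assignment x ⊕= e with ⟨σ, e⟩ ⇓ v, and x does not occur in e (so that ⟨σ', e⟩ ⇓ v as well), then applying the inverse update yields the original store: σ'[x ↦ ⟦I_op(⊕)⟧(σ'(x), v)] = σ. -/
import Mathlib


/-- Janus reversible assignment operators: `+=`, `-=`, `^=`. -/
inductive Op where
  | add | sub | xor
deriving DecidableEq

/-- The operator inverter `I_op`. -/
def Op.inv : Op → Op
  | .add => .sub
  | .sub => .add
  | .xor => .xor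

/-- Interpretation of the operators on integers. -/
def Op.apply : Op → Int → Int → Int
  | .add, a, b => a + b
  | .sub, a, b => a - b
  | .xor, a, b => Int.xor a b

/-- Storage locations: plain variables and indexed array cells. -/
inductive Loc where
  | var (x : String)
  | arr (x : String) (i : Int)
deriving DecidableEq

/-- A store maps variable names and indexed variable names to values. -/
def Store := Loc → Int

def Store.update (σ : Store) (l : Loc) (v : Int) : Store :=
  fun l' => if l' = l then v else σ l'

/-- The empty store maps every variable to zero. -/
def emptyStore : Store := fun _ => 0

/-- Janus expressions. Binary operators are modelled by their interpretation. -/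
inductive Expr where
  | const (c : Int)
  | var (x : String)
  | arr (x : String) (e : Expr)
  | bop (f : Int → Int → Int) (e1 e2 : Expr)

/-- Evaluation of expressions (a deterministic function of the store). -/
def Expr.eval (σ : Store) : Expr → Int
  | .const c => c
  | .var x => σ (.var x)
  | .arr x e => σ (.arr x (Expr.eval σ e))
  | .bop f e1 e2 => f (Expr.eval σ e1) (Expr.eval σ e2)

/-- `e.usesVar x` : the name `x` occurs in the expression `e`. -/
def Expr.usesVar (x : String) : Expr → Prop
  | .const _ => False
  | .var y => y = x
  | .arr y e => y = x ∨ e.usesVar x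
  | .bop _ e1 e2 => e1.usesVar x ∨ e2.usesVar x

lemma xor_xor_cancel (a v : Int) : Int.xor (Int.xor a v) v = a := by
  rcases a with a|a <;> rcases v with v|v <;> simp [Int.xor, Nat.xor_assoc]

/-- Backward determinism of inverse assignment: if
`σ' = σ[x ↦ ⟦⊕⟧(σ(x), v)]` results from the assignment `x ⊕= e` with
`⟨σ, e⟩ ⇓ v` and `x` does not occur in `e`, then the inverse update restores
the original store: `σ'[x ↦ ⟦I_op(⊕)⟧(σ'(x), v)] = σ`. -/
theorem stmt9_backward_determinism (σ σ' : Store) (x : String) (op : Op)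
    (e : Expr) (v : Int)
    (hocc : ¬ e.usesVar x)
    (hv : e.eval σ = v)
    (hσ' : σ' = σ.update (.var x) (op.apply (σ (.var x)) v)) :
    σ'.update (.var x) (op.inv.apply (σ' (.var x)) v) = σ := by
  subst hσ'
  funext l
  simp only [Store.update]
  split
  · next h =>
    subst h
    cases op <;> simp [Op.apply, Op.inv, xor_xor_cancel]
  · rfl
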